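/- arXiv:2405.20847 — 4 statements merged into one kernel-verified Lean document; each statement's English description precedes it below -/
import Mathlib

section
/- Let G=(V,E) be a graph and S a proportionally dense subgraph of G. If u ∈ S satisfies d(u) < (|V|-1)/(|V|-|S|), then all neighbors of u are contained in S. -/
open Finset

/-- Number of neighbors of `u` inside `S`. -/
def degIn {V : Type*} [Fintype V] [DecidableEq V] (G : SimpleGraph V) [DecidableRel G.Adj]
    (S : Finset V) (u : V) : ℕ :=
  (G.neighborFinset u ∩ S).card

/-- `u` is satisfied with respect to `S`: the PDS inequality holds at `u`. -/
def Satisfies {V : Type*} [Fintype V] [DecidableEq V] (G : SimpleGraph V) [DecidableRel G.Adj]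
    (S : Finset V) (u : V) : Prop :=
  (degIn G S u : ℚ) / ((S.card : ℚ) - 1) ≥ (degIn G Sᶜ u : ℚ) / ((Fintype.card V : ℚ) - S.card)

/-- `S` is a proportionally dense subgraph of `G`. -/
def IsPDS {V : Type*} [Fintype V] [DecidableEq V] (G : SimpleGraph V) [DecidableRel G.Adj]
    (S : Finset V) : Prop :=
  2 ≤ S.card ∧ S.card < Fintype.card V ∧ ∀ u ∈ S, Satisfies G S u

/-- If `S` is a PDS and `u ∈ S` has `d(u) < (|V|-1)/(|V|-|S|)`, then all neighbors of
`u` are in `S`. -/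
theorem stmt2 {V : Type*} [Fintype V] [DecidableEq V] (G : SimpleGraph V) [DecidableRel G.Adj]
    (S : Finset V) (hS : IsPDS G S) (u : V) (hu : u ∈ S)
    (hdeg : (G.degree u : ℚ) < ((Fintype.card V : ℚ) - 1) / ((Fintype.card V : ℚ) - S.card)) :
    G.neighborFinset u ⊆ S := by
  obtain ⟨h2, hlt, hsat⟩ := hS
  have hsum : degIn G S u + degIn G Sᶜ u = G.degree u := by
    rw [degIn, degIn, SimpleGraph.degree, ← Finset.card_union_of_disjoint]
    · congr 1
      rw [← Finset.inter_union_distrib_left, Finset.union_compl, Finset.inter_univ]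
    · exact Finset.disjoint_left.2 fun v hv hv' =>
        (Finset.mem_compl.1 (Finset.mem_inter.1 hv').2) (Finset.mem_inter.1 hv).2
  have hb0 : degIn G Sᶜ u = 0 := by
    by_contra hb
    have hb1 : (1 : ℚ) ≤ degIn G Sᶜ u := by exact_mod_cast Nat.one_le_iff_ne_zero.2 hb
    have hs1 : (1 : ℚ) ≤ (S.card : ℚ) - 1 := by
      have : (2 : ℚ) ≤ S.card := by exact_mod_cast h2
      linarith
    have hns : (1 : ℚ) ≤ (Fintype.card V : ℚ) - S.card := by
      have : (S.card : ℚ) + 1 ≤ Fintype.card V := by exact_mod_cast hlt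
      linarith
    have h := hsat u hu
    rw [Satisfies, ge_iff_le, div_le_div_iff₀ (by linarith) (by linarith)] at h
    have hdeg' : ((G.degree u : ℚ)) * ((Fintype.card V : ℚ) - S.card) <
        (Fintype.card V : ℚ) - 1 := by
      rw [lt_div_iff₀ (by linarith)] at hdeg
      linarith
    have hsum' : (degIn G S u : ℚ) + degIn G Sᶜ u = G.degree u := by exact_mod_cast hsum
    nlinarith [h, hdeg', hsum', hb1, hs1, hns]
  intro v hv
  by_contra hvS
  have : v ∈ G.neighborFinset u ∩ Sᶜ := Finset.mem_inter.2 ⟨hv, Finset.mem_compl.2 hvS⟩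
  have := Finset.card_pos.2 ⟨v, this⟩
  rw [show (G.neighborFinset u ∩ Sᶜ).card = degIn G Sᶜ u from rfl, hb0] at this
  exact absurd this (lt_irrefl 0)
end

section
/- Let G=(V,E) be a graph with h(G)=2, let u*,v* be the two vertices of maximum degree, and let S be a PDS of G of size at least |V|/2 + 1. Then every path and every cycle of G[V \ {u*,v*}] is either entirely contained in S or entirely contained in V\S. -/
open Finset

/-- Let `G` have h-index 2 with maximum-degree vertices `u⋆, v⋆` and let `S` be a PDS of
size at least `|V|/2 + 1`. Then every path or cycle (i.e. connected component) `C` of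
`G[V ∖ {u⋆,v⋆}]` is entirely contained in `S` or entirely contained in `V ∖ S`. -/
theorem stmt13 {V : Type*} [Fintype V] [DecidableEq V] (G : SimpleGraph V) [DecidableRel G.Adj]
    (us vs : V) (hne : us ≠ vs)
    (hIdx : ∀ w : V, w ≠ us → w ≠ vs → G.degree w ≤ 2)
    (S : Finset V) (hS : IsPDS G S)
    (hcard : (Fintype.card V : ℚ) / 2 + 1 ≤ (S.card : ℚ))
    (C : Finset V) (hCu : us ∉ C) (hCv : vs ∉ C)
    (hconn : (G.induce (C : Set V)).Connected)
    (hclosed : ∀ x ∈ C, ∀ y : V, y ≠ us → y ≠ vs → G.Adj x y → y ∈ C) :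
    C ⊆ S ∨ C ⊆ Sᶜ := by
  obtain ⟨hS2, hSn, hsat⟩ := hS
  -- key lemma: a low-degree vertex of S has all its neighbors in S
  have key : ∀ u ∈ S, G.degree u ≤ 2 → ∀ y : V, G.Adj u y → y ∈ S := by
    intro u huS hdeg y hadj
    by_contra hyS
    have hy : y ∈ G.neighborFinset u ∩ Sᶜ := by
      simp [SimpleGraph.mem_neighborFinset, hadj, hyS]
    have h1 : 1 ≤ degIn G Sᶜ u := Finset.card_pos.mpr ⟨y, hy⟩
    have hsplit : degIn G S u + degIn G Sᶜ u = G.degree u := by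
      unfold degIn
      have hc : G.neighborFinset u ∩ Sᶜ = G.neighborFinset u \ S := by
        ext x; simp
      rw [hc, Finset.card_inter_add_card_sdiff, SimpleGraph.card_neighborFinset_eq_degree]
    have hsu := hsat u huS
    unfold Satisfies at hsu
    have hs1 : (0:ℚ) < (S.card : ℚ) - 1 := by
      have : (2:ℚ) ≤ (S.card : ℚ) := by exact_mod_cast hS2
      linarith
    have hns : (0:ℚ) < (Fintype.card V : ℚ) - S.card := by
      have : (S.card : ℚ) < (Fintype.card V : ℚ) := by exact_mod_cast hSn
      linarith
    rw [ge_iff_le, div_le_div_iff₀ hns hs1] at hsu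
    have hdS : (degIn G S u : ℚ) ≤ 1 := by
      have : degIn G S u ≤ 1 := by omega
      exact_mod_cast this
    have hdC : (1:ℚ) ≤ (degIn G Sᶜ u : ℚ) := by exact_mod_cast h1
    have hdS0 : (0:ℚ) ≤ (degIn G S u : ℚ) := by positivity
    nlinarith [hsu, hcard, hs1, hns]
  -- membership in S propagates along walks in the induced graph on C
  have walkS : ∀ (a b : (C : Set V)), (G.induce (C : Set V)).Reachable a b →
      (a : V) ∈ S → (b : V) ∈ S := by
    intro a b hr
    obtain ⟨w⟩ := hr
    induction w with
    | nil => exact id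
    | cons h p ih =>
      rename_i x c d
      intro hxS
      apply ih
      have hadj : G.Adj (x : V) (c : V) := h
      have hxC : (x : V) ∈ C := x.2
      exact key _ hxS (hIdx _ (fun he => hCu (he ▸ hxC)) (fun he => hCv (he ▸ hxC)))
        _ hadj
  by_cases h1 : C ⊆ S
  · exact Or.inl h1
  · right
    obtain ⟨y, hyC, hyS⟩ := not_subset.mp h1
    intro x hxC
    rw [Finset.mem_compl]
    intro hxS
    exact hyS (walkS ⟨x, hxC⟩ ⟨y, hyC⟩ (hconn.preconnected _ _) hxS)
end

section
/- Let G=(V,E) be a graph with h(G)=2, u* of maximum degree, and S a PDS of size at least |V|/2 + 1 with u* ∉ S. If P is a path of G[V \ {u*,v*}] having an endpoint adjacent to u*, then P ⊆ V\S. -/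
open Finset

/-- One-to-all: a low-degree satisfied vertex of a large PDS has all neighbors in `S`. -/
lemma oneToAll {V : Type*} [Fintype V] [DecidableEq V] (G : SimpleGraph V) [DecidableRel G.Adj]
    (S : Finset V) (hS : IsPDS G S)
    (hcard : (Fintype.card V : ℚ) / 2 + 1 ≤ (S.card : ℚ))
    (w : V) (hwS : w ∈ S) (hdeg : G.degree w ≤ 2) :
    ∀ y : V, G.Adj w y → y ∈ S := by
  intro y hadj
  by_contra hyS
  obtain ⟨hs2, hsn, hsat⟩ := hS
  have hsat := hsat w hwS
  have hsplit : degIn G S w + degIn G Sᶜ w = G.degree w := by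
    unfold degIn
    rw [← SimpleGraph.card_neighborFinset_eq_degree]
    have : G.neighborFinset w ∩ Sᶜ = G.neighborFinset w \ S := by
      ext x; simp [Finset.mem_sdiff, Finset.mem_compl, and_comm]
    rw [this, Finset.card_inter_add_card_sdiff]
  have hy1 : 1 ≤ degIn G Sᶜ w := by
    apply Finset.card_pos.mpr
    exact ⟨y, by simp [SimpleGraph.mem_neighborFinset, hadj, hyS]⟩
  have ha1 : degIn G S w ≤ 1 := by omega
  -- rational inequalities
  have hs2' : (2 : ℚ) ≤ (S.card : ℚ) := by exact_mod_cast hs2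
  have hsn' : (S.card : ℚ) < (Fintype.card V : ℚ) := by exact_mod_cast hsn
  set n : ℚ := (Fintype.card V : ℚ)
  set s : ℚ := (S.card : ℚ)
  have hpos1 : (0 : ℚ) < s - 1 := by linarith
  have hpos2 : (0 : ℚ) < n - s := by linarith
  have ha1' : (degIn G S w : ℚ) ≤ 1 := by exact_mod_cast ha1
  have hy1' : (1 : ℚ) ≤ (degIn G Sᶜ w : ℚ) := by exact_mod_cast hy1
  unfold Satisfies at hsat
  rw [ge_iff_le, div_le_div_iff₀ hpos2 hpos1] at hsat
  nlinarith [hsat, ha1', hy1', hpos1, hpos2]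

/-- Let `G` have h-index 2 with maximum-degree vertices `u⋆, v⋆`, and `S` a PDS of size
at least `|V|/2 + 1` with `u⋆ ∉ S`. If `P` is a path of `G[V ∖ {u⋆,v⋆}]` with an
endpoint adjacent to `u⋆`, then `P ⊆ V ∖ S`. -/
theorem stmt14 {V : Type*} [Fintype V] [DecidableEq V] (G : SimpleGraph V) [DecidableRel G.Adj]
    (us vs : V) (hne : us ≠ vs)
    (hIdx : ∀ w : V, w ≠ us → w ≠ vs → G.degree w ≤ 2)
    (S : Finset V) (hS : IsPDS G S)
    (hcard : (Fintype.card V : ℚ) / 2 + 1 ≤ (S.card : ℚ))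
    (husS : us ∉ S)
    (P : Finset V) (hPu : us ∉ P) (hPv : vs ∉ P)
    (hconn : (G.induce (P : Set V)).Connected)
    (hclosed : ∀ x ∈ P, ∀ y : V, y ≠ us → y ≠ vs → G.Adj x y → y ∈ P)
    (hend : ∃ p ∈ P, G.Adj p us) :
    P ⊆ Sᶜ := by
  intro x hxP
  rw [Finset.mem_compl]
  by_contra hxS
  obtain ⟨p, hpP, hpus⟩ := hend
  -- degree bound for members of P
  have hdegP : ∀ w ∈ P, G.degree w ≤ 2 := fun w hw =>
    hIdx w (fun h => hPu (h ▸ hw)) (fun h => hPv (h ▸ hw))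
  -- propagate S-membership along walks in the induced graph
  have key : ∀ (a b : (P : Set V)) (_ : (G.induce (P : Set V)).Walk a b),
      (a : V) ∈ S → (b : V) ∈ S := by
    intro a b walk
    induction walk with
    | nil => exact id
    | @cons u v w h q ih =>
      intro haS
      apply ih
      have hadj : G.Adj u v := h
      exact oneToAll G S hS hcard u haS (hdegP u u.2) v hadj
  -- reach from x to p
  have hreach := (hconn ⟨x, hxP⟩ ⟨p, hpP⟩)
  obtain ⟨walk⟩ := hreach
  have hpS : p ∈ S := key _ _ walk hxS
  exact husS (oneToAll G S hS hcard p hpS (hdegP p hpP) us hpus)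
end

section
/- Let G be a cycle on n ≥ 3 vertices. Any set S of ⌈n/2⌉ consecutive vertices of the cycle is a connected PDS of G, and it has maximum size among connected PDSs of G. -/
open Finset

/-- The cycle graph on `ZMod n`: `x` is adjacent to `x ± 1`. -/
def cycleGraph (n : ℕ) : SimpleGraph (ZMod n) where
  Adj x y := x ≠ y ∧ (y = x + 1 ∨ x = y + 1)
  symm := ⟨fun x y h => ⟨h.1.symm, h.2.symm⟩⟩
  loopless := ⟨fun x h => h.1 rfl⟩

instance (n : ℕ) : DecidableRel (cycleGraph n).Adj :=
  fun x y => inferInstanceAs (Decidable (x ≠ y ∧ (y = x + 1 ∨ x = y + 1)))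


/-! Every vertex of a cycle has degree 2, so at a vertex `u ∈ S` the PDS inequality
`d_S(u)/(|S|-1) ≥ d_{V∖S}(u)/(n-|S|)` holds trivially when `d_S(u) = 2`, fails when `d_S(u) = 0`,
and reduces to `2|S| ≤ n + 1` when `d_S(u) = 1`. An arc of `⌈n/2⌉` consecutive vertices is
connected, so each of its vertices has a neighbour inside it, and it is a PDS. Conversely, since the
cycle is connected, any proper subset `S` has a vertex with a neighbour outside `S`, where
`d_S ≤ 1`; the PDS inequality there forces `2|S| ≤ n + 1`. -/

section PDS

variable {V : Type*} [Fintype V] [DecidableEq V] {G : SimpleGraph V} [DecidableRel G.Adj]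
  {S : Finset V} {u : V}

variable (G) in
lemma degIn_add_degIn_compl (S : Finset V) (u : V) :
    degIn G S u + degIn G Sᶜ u = G.degree u := by
  rw [degIn, degIn, ← sdiff_eq_inter_compl, card_inter_add_card_sdiff,
    SimpleGraph.card_neighborFinset_eq_degree]

lemma degIn_pos_of_adj {v : V} (huv : G.Adj u v) (hv : v ∈ S) : 0 < degIn G S u :=
  card_pos.mpr ⟨v, mem_inter.mpr ⟨(G.mem_neighborFinset u v).mpr huv, hv⟩⟩

lemma satisfies_iff_mul_le (h2 : 2 ≤ #S) (hlt : #S < Fintype.card V) :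
    Satisfies G S u ↔ degIn G Sᶜ u * (#S - 1) ≤ degIn G S u * (Fintype.card V - #S) := by
  have hS : ((#S - 1 : ℕ) : ℚ) = #S - 1 := by
    push_cast [Nat.cast_sub (by omega : 1 ≤ #S)]; ring
  have hV : ((Fintype.card V - #S : ℕ) : ℚ) = Fintype.card V - #S := by
    push_cast [Nat.cast_sub hlt.le]; ring
  have hS0 : (0 : ℚ) < #S - 1 := by rw [← hS]; exact_mod_cast (by omega : 0 < #S - 1)
  have hV0 : (0 : ℚ) < Fintype.card V - #S := by
    rw [← hV]; exact_mod_cast (by omega : 0 < Fintype.card V - #S)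
  rw [Satisfies, ge_iff_le, div_le_div_iff₀ hV0 hS0, ← hS, ← hV]
  exact_mod_cast Iff.rfl

theorem isPDS_of_isRegularOfDegree_two (hG : G.IsRegularOfDegree 2)
    (hconn : (G.induce (S : Set V)).Connected) (h2 : 2 ≤ #S) (hS : 2 * #S ≤ Fintype.card V + 1) :
    IsPDS G S := by
  have hlt : #S < Fintype.card V := by omega
  refine ⟨h2, hlt, fun u hu => (satisfies_iff_mul_le h2 hlt).mpr ?_⟩
  have : Nontrivial (S : Set V) := Set.nontrivial_coe_sort.mpr (one_lt_card_iff_nontrivial.mp h2)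
  obtain ⟨⟨v, hv⟩, huv⟩ := hconn.preconnected.exists_adj_of_nontrivial ⟨u, hu⟩
  have hin : 0 < degIn G S u := degIn_pos_of_adj huv hv
  have hsum := degIn_add_degIn_compl G S u
  rw [hG u] at hsum
  obtain h | h : degIn G S u = 1 ∨ degIn G S u = 2 := by omega
  · rw [h, show degIn G Sᶜ u = 1 by omega]; omega
  · rw [h, show degIn G Sᶜ u = 0 by omega]; omega

theorem two_mul_card_le_of_isPDS (hG : G.IsRegularOfDegree 2) (hconn : G.Connected)
    (hS : IsPDS G S) : 2 * #S ≤ Fintype.card V + 1 := by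
  obtain ⟨h2, hlt, hsat⟩ := hS
  obtain ⟨u, hu⟩ : S.Nonempty := card_pos.mp (by omega)
  obtain ⟨v, hv⟩ : ∃ v, v ∉ S := by
    by_contra! h
    exact hlt.ne (by rw [eq_univ_of_forall h, card_univ])
  obtain ⟨d, -, hd₁, hd₂⟩ := (hconn u v).some.exists_boundary_dart (S : Set V) hu hv
  have hout : 0 < degIn G Sᶜ d.fst := degIn_pos_of_adj d.adj (mem_compl.mpr hd₂)
  have hsum := degIn_add_degIn_compl G S d.fst
  rw [hG d.fst] at hsum
  have hsat := (satisfies_iff_mul_le h2 hlt).mp (hsat d.fst hd₁)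
  obtain h | h : degIn G S d.fst = 0 ∨ degIn G S d.fst = 1 := by omega
  · rw [h, show degIn G Sᶜ d.fst = 2 by omega] at hsat; omega
  · rw [h, show degIn G Sᶜ d.fst = 1 by omega] at hsat; omega

end PDS

section Cycle

variable {n : ℕ}

lemma cycleGraph_neighborFinset [NeZero n] (hn : 2 ≤ n) (u : ZMod n) :
    (cycleGraph n).neighborFinset u = {u + 1, u - 1} := by
  have : Fact (1 < n) := ⟨hn⟩
  ext v
  rw [SimpleGraph.mem_neighborFinset, mem_insert, mem_singleton, eq_sub_iff_add_eq,
    eq_comm (b := u)]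
  refine ⟨And.right, fun h => ⟨?_, h⟩⟩
  rintro rfl
  rcases h with h | h <;> simp at h

lemma cycleGraph_isRegularOfDegree_two [NeZero n] (hn : 3 ≤ n) :
    (cycleGraph n).IsRegularOfDegree 2 := by
  intro u
  rw [← SimpleGraph.card_neighborFinset_eq_degree, cycleGraph_neighborFinset (by omega),
    card_pair]
  intro h
  have h2 : ((2 : ℕ) : ZMod n) = 0 := by push_cast; linear_combination h
  rw [ZMod.natCast_eq_zero_iff] at h2
  have := Nat.le_of_dvd two_pos h2
  omega

lemma cycleGraph_induce_reachable_add_one {s : Set (ZMod n)} {x : ZMod n} (hx : x ∈ s)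
    (hx' : x + 1 ∈ s) : ((cycleGraph n).induce s).Reachable ⟨x, hx⟩ ⟨x + 1, hx'⟩ := by
  by_cases h : x = x + 1
  · have hxx : (⟨x, hx⟩ : s) = ⟨x + 1, hx'⟩ := Subtype.ext h
    exact hxx ▸ .refl _
  · exact SimpleGraph.Adj.reachable ⟨h, Or.inl rfl⟩

def arc (a : ZMod n) (k : ℕ) : Finset (ZMod n) :=
  (range k).image fun i : ℕ => a + (i : ZMod n)

lemma add_mem_arc {a : ZMod n} {k i : ℕ} (hi : i < k) : a + (i : ZMod n) ∈ arc a k :=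
  mem_image_of_mem _ (mem_range.mpr hi)

lemma card_arc (a : ZMod n) {k : ℕ} (hk : k ≤ n) : #(arc a k) = k := by
  rw [arc, card_image_of_injOn, card_range]
  intro i hi j hj hij
  have hij : (i : ZMod n) = j := add_left_cancel hij
  rw [coe_range, Set.mem_Iio] at hi hj
  rwa [ZMod.natCast_eq_natCast_iff', Nat.mod_eq_of_lt (by omega),
    Nat.mod_eq_of_lt (by omega)] at hij

lemma arc_connected (a : ZMod n) {k : ℕ} (hk : 0 < k) :
    ((cycleGraph n).induce (arc a k : Set (ZMod n))).Connected := by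
  rw [SimpleGraph.connected_iff_exists_forall_reachable]
  have ha : a ∈ arc a k := by simpa using add_mem_arc (a := a) hk
  refine ⟨⟨a, ha⟩, ?_⟩
  rintro ⟨x, hx⟩
  obtain ⟨i, hi, rfl⟩ := mem_image.mp hx
  induction i with
  | zero => convert SimpleGraph.Reachable.refl _ using 2; simp
  | succ i ih =>
    have hi' : i < k := by rw [mem_range] at hi; omega
    have hcast : a + ((i + 1 : ℕ) : ZMod n) = a + i + 1 := by push_cast; ring
    refine (ih (mem_range.mpr hi') (add_mem_arc hi')).trans ?_
    convert cycleGraph_induce_reachable_add_one (add_mem_arc hi') (hcast ▸ hx)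

lemma arc_eq_univ [NeZero n] (a : ZMod n) : arc a n = univ :=
  eq_univ_of_card _ (by rw [card_arc a le_rfl, ZMod.card])

lemma cycleGraph_connected [NeZero n] : (cycleGraph n).Connected := by
  have h := arc_connected (0 : ZMod n) (NeZero.pos n)
  rw [arc_eq_univ, coe_univ] at h
  exact (SimpleGraph.induceUnivIso _).connected_iff.mp h

end Cycle

/-- In the cycle on `n ≥ 3` vertices, any set of `⌈n/2⌉` consecutive vertices is a
connected PDS, and it has maximum size among connected PDSs. -/
theorem stmt19 (n : ℕ) (hn : 3 ≤ n) [NeZero n] (a : ZMod n) :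
    (IsPDS (cycleGraph n) ((Finset.range ((n + 1) / 2)).image (fun i : ℕ => a + (i : ZMod n))) ∧
      ((cycleGraph n).induce
        ((((Finset.range ((n + 1) / 2)).image (fun i : ℕ => a + (i : ZMod n))) : Finset (ZMod n)) :
          Set (ZMod n))).Connected) ∧
    ∀ S' : Finset (ZMod n), IsPDS (cycleGraph n) S' →
      ((cycleGraph n).induce (S' : Set (ZMod n))).Connected →
      S'.card ≤ ((Finset.range ((n + 1) / 2)).image (fun i : ℕ => a + (i : ZMod n))).card := by
  change (IsPDS _ (arc a ((n + 1) / 2)) ∧ _) ∧ ∀ S' : Finset (ZMod n), _ → _ → _ ≤ #(arc a _)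
  have hreg := cycleGraph_isRegularOfDegree_two hn
  have hconn := arc_connected a (k := (n + 1) / 2) (by omega)
  have hcard := card_arc a (k := (n + 1) / 2) (by omega)
  rw [hcard]
  refine ⟨⟨isPDS_of_isRegularOfDegree_two hreg hconn (by omega) ?_, hconn⟩, fun S hS _ => ?_⟩
  · rw [hcard, ZMod.card]
    omega
  · have := two_mul_card_le_of_isPDS hreg cycleGraph_connected hS
    rw [ZMod.card] at this
    omega
end
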